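/- Let a_1, ..., a_C be real numbers in [0,1] and define the running averages A_c = (1/c)*(a_1 + ... + a_c). Suppose that for every c in {2,...,C}, |A_{c-1} - a_c| <= eps. Then for every c in {1,...,C}, |A_C - a_c| <= eps * (1 + sum_{c'=c+1}^{C} 2/c'), and hence for any c, c' in {1,...,C}, |a_c - a_{c'}| <= 2*eps*(1 + sum_{k=2}^{C} 2/k) <= 2*eps*(1 + 2*log C + 2). -/

import Mathlib

/-!
Adding the `(n+1)`-st term moves the running average by `(a (n+1) - A n) / (n+1)`, so as long
as each new term is `eps`-close to the previous average, `A` drifts by at most `eps / (n+1)` per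
step. Starting from `|A c - a c| ≤ eps` (as `A c - a c = (c-1)/c * (A (c-1) - a c)`) and summing
these drifts bounds `|A C - a c|`; the triangle inequality through `A C` then compares any two
terms, and the harmonic tail is at most `log C`.
-/

open Finset

noncomputable def runningAverage (a : ℕ → ℝ) (n : ℕ) : ℝ :=
  (n : ℝ)⁻¹ * ∑ k ∈ Icc 1 n, a k

section

variable {a : ℕ → ℝ} {eps : ℝ}

theorem runningAverage_one : runningAverage a 1 = a 1 := by
  simp [runningAverage]

theorem runningAverage_succ {n : ℕ} (hn : n ≠ 0) :
    runningAverage a (n + 1) =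
      runningAverage a n + (a (n + 1) - runningAverage a n) / (n + 1) := by
  have hn' : (n : ℝ) ≠ 0 := Nat.cast_ne_zero.mpr hn
  simp only [runningAverage, sum_Icc_succ_top (by omega : 1 ≤ n + 1), Nat.cast_add_one]
  field_simp
  ring

theorem runningAverage_succ_sub_self {n : ℕ} (hn : n ≠ 0) :
    runningAverage a (n + 1) - a (n + 1) =
      n / (n + 1) * (runningAverage a n - a (n + 1)) := by
  rw [runningAverage_succ hn]
  field_simp
  ring

theorem abs_runningAverage_sub_self_le {c : ℕ} (hc : 1 ≤ c) (heps : 0 ≤ eps)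
    (hclose : 2 ≤ c → |runningAverage a (c - 1) - a c| ≤ eps) :
    |runningAverage a c - a c| ≤ eps := by
  obtain rfl | ⟨n, hn, rfl⟩ : c = 1 ∨ ∃ n, n ≠ 0 ∧ c = n + 1 :=
    (eq_or_lt_of_le hc).imp Eq.symm fun h => ⟨c - 1, by omega, by omega⟩
  · simpa [runningAverage_one] using heps
  have hfactor : |(n : ℝ) / (n + 1)| ≤ 1 := by
    rw [abs_of_nonneg (by positivity), div_le_one (by positivity)]
    linarith
  calc |runningAverage a (n + 1) - a (n + 1)|
      = |(n : ℝ) / (n + 1)| * |runningAverage a n - a (n + 1)| := by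
        rw [runningAverage_succ_sub_self hn, abs_mul]
    _ ≤ 1 * eps := mul_le_mul hfactor (hclose (by omega)) (abs_nonneg _) zero_le_one
    _ = eps := one_mul eps

theorem abs_runningAverage_succ_sub_le {n : ℕ} (hn : n ≠ 0)
    (hclose : |runningAverage a n - a (n + 1)| ≤ eps) (x : ℝ) :
    |runningAverage a (n + 1) - x| ≤ |runningAverage a n - x| + eps / (n + 1) := by
  have hdrift : |(a (n + 1) - runningAverage a n) / (n + 1)| ≤ eps / (n + 1) := by
    rw [abs_div, abs_sub_comm, abs_of_pos (by positivity : (0 : ℝ) < n + 1)]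
    gcongr
  calc |runningAverage a (n + 1) - x|
      = |(runningAverage a n - x) + (a (n + 1) - runningAverage a n) / (n + 1)| := by
        rw [runningAverage_succ hn]
        ring_nf
    _ ≤ _ := (abs_add_le _ _).trans (by gcongr)

theorem abs_runningAverage_sub_le_of_chain {c n : ℕ} (hc : 1 ≤ c) (hcn : c ≤ n)
    (hclose : ∀ m ∈ Icc (c + 1) n, |runningAverage a (m - 1) - a m| ≤ eps) (x : ℝ) :
    |runningAverage a n - x| ≤ |runningAverage a c - x| + ∑ m ∈ Icc (c + 1) n, eps / m := by
  induction n, hcn using Nat.le_induction with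
  | base => simp
  | succ n hcn ih =>
    have hstep := abs_runningAverage_succ_sub_le (n := n) (by omega)
      (by simpa using hclose (n + 1) (by simp; omega)) x
    have ih' := ih fun m hm => hclose m (Icc_subset_Icc_right n.le_succ hm)
    rw [sum_Icc_succ_top (by omega), Nat.cast_add_one]
    linarith

theorem abs_runningAverage_sub_le {c n : ℕ} (hc : c ∈ Icc 1 n) (heps : 0 ≤ eps)
    (hclose : ∀ m ∈ Icc 2 n, |runningAverage a (m - 1) - a m| ≤ eps) :
    |runningAverage a n - a c| ≤ eps + ∑ m ∈ Icc (c + 1) n, eps / m := by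
  obtain ⟨hc1, hcn⟩ := mem_Icc.mp hc
  have hstart := abs_runningAverage_sub_self_le hc1 heps fun h2 => hclose c (by simp; omega)
  have hdrift := abs_runningAverage_sub_le_of_chain hc1 hcn
    (fun m hm => hclose m (Icc_subset_Icc_left (by omega) hm)) (a c)
  linarith

end

theorem sum_Icc_two_inv_le_log (n : ℕ) : ∑ k ∈ Icc 2 n, (k : ℝ)⁻¹ ≤ Real.log n := by
  rcases Nat.eq_zero_or_pos n with rfl | hn
  · simp
  have hsplit : ∑ k ∈ Icc 1 n, (k : ℝ)⁻¹ = 1 + ∑ k ∈ Icc 2 n, (k : ℝ)⁻¹ := by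
    rw [← add_sum_Ioc_eq_sum_Icc hn, ← Icc_add_one_left_eq_Ioc]
    norm_num
  have hharmonic : ∑ k ∈ Icc 1 n, (k : ℝ)⁻¹ ≤ 1 + Real.log n := by
    simpa [harmonic_eq_sum_Icc] using harmonic_le_one_add_log n
  linarith

theorem running_average_chaining_general (C : ℕ) (eps : ℝ) (heps : 0 ≤ eps)
    (a : ℕ → ℝ)
    (A : ℕ → ℝ) (hA : ∀ c, A c = (1 / (c : ℝ)) * ∑ k ∈ Finset.Icc 1 c, a k)
    (hclose : ∀ c ∈ Finset.Icc 2 C, |A (c - 1) - a c| ≤ eps) :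
    (∀ c ∈ Finset.Icc 1 C,
        |A C - a c| ≤ eps * (1 + ∑ c' ∈ Finset.Icc (c + 1) C, 2 / (c' : ℝ))) ∧
    (∀ c ∈ Finset.Icc 1 C, ∀ c' ∈ Finset.Icc 1 C,
        |a c - a c'| ≤ 2 * eps * (1 + ∑ k ∈ Finset.Icc 2 C, 2 / (k : ℝ)) ∧
        2 * eps * (1 + ∑ k ∈ Finset.Icc 2 C, 2 / (k : ℝ))
          ≤ 2 * eps * (1 + 2 * Real.log C + 2)) := by
  obtain rfl : A = runningAverage a := funext fun c => by rw [hA, runningAverage, one_div]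
  have hchain : ∀ c ∈ Icc 1 C,
      |runningAverage a C - a c| ≤ eps * (1 + ∑ c' ∈ Icc (c + 1) C, 2 / (c' : ℝ)) := by
    intro c hc
    have htail :
        ∑ m ∈ Icc (c + 1) C, eps / (m : ℝ) ≤ eps * ∑ m ∈ Icc (c + 1) C, 2 / (m : ℝ) := by
      rw [mul_sum]
      gcongr with m
      rw [mul_div_assoc']
      gcongr
      linarith
    linarith [abs_runningAverage_sub_le hc heps hclose]
  have hbound : ∀ c ∈ Icc 1 C,
      |runningAverage a C - a c| ≤ eps * (1 + ∑ k ∈ Icc 2 C, 2 / (k : ℝ)) := fun c hc =>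
    (hchain c hc).trans <| mul_le_mul_of_nonneg_left (add_le_add_right
      (sum_le_sum_of_subset_of_nonneg (Icc_subset_Icc_left (by simp at hc; omega))
        fun _ _ _ => by positivity) 1) heps
  have hharmonic : ∑ k ∈ Icc 2 C, 2 / (k : ℝ) ≤ 2 * Real.log C := by
    simpa [div_eq_mul_inv, ← mul_sum] using sum_Icc_two_inv_le_log C
  refine ⟨hchain, fun c hc c' hc' =>
    ⟨?_, mul_le_mul_of_nonneg_left (by linarith) (by linarith)⟩⟩
  calc |a c - a c'| ≤ |runningAverage a C - a c| + |runningAverage a C - a c'| := by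
        rw [← abs_sub_comm (a c)]; exact abs_sub_le _ _ _
    _ ≤ _ := by linarith [hbound c hc, hbound c' hc']

theorem running_average_chaining (C : ℕ) (hC : 0 < C) (eps : ℝ) (heps : 0 ≤ eps)
    (a : ℕ → ℝ) (ha : ∀ c ∈ Finset.Icc 1 C, a c ∈ Set.Icc (0 : ℝ) 1)
    (A : ℕ → ℝ) (hA : ∀ c, A c = (1 / (c : ℝ)) * ∑ k ∈ Finset.Icc 1 c, a k)
    (hclose : ∀ c ∈ Finset.Icc 2 C, |A (c - 1) - a c| ≤ eps) :
    (∀ c ∈ Finset.Icc 1 C,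
        |A C - a c| ≤ eps * (1 + ∑ c' ∈ Finset.Icc (c + 1) C, 2 / (c' : ℝ))) ∧
    (∀ c ∈ Finset.Icc 1 C, ∀ c' ∈ Finset.Icc 1 C,
        |a c - a c'| ≤ 2 * eps * (1 + ∑ k ∈ Finset.Icc 2 C, 2 / (k : ℝ)) ∧
        2 * eps * (1 + ∑ k ∈ Finset.Icc 2 C, 2 / (k : ℝ))
          ≤ 2 * eps * (1 + 2 * Real.log C + 2)) :=
  running_average_chaining_general C eps heps a A hA hclose
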